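/- Every graph in the family F_5 is 4-χρ-vertex-critical; that is, for all A, B ∈ {P_4, C_4} and every even l ≥ 0, the graph G obtained by joining a non-pendant vertex of A to a non-pendant vertex of B by a path with exactly l internal vertices satisfies χρ(G) = 4 and χρ(G − v) < 4 for every vertex v. -/

import Mathlib

open SimpleGraph

/-- A `k`-packing coloring of `G`: colors in `{1,…,k}` and distinct vertices of equal color `i`
are at (extended, shortest-path) distance greater than `i`. -/
def IsPackingColoring {V : Type*} (G : SimpleGraph V) (k : ℕ) (c : V → ℕ) : Prop :=
  (∀ v, 1 ≤ c v ∧ c v ≤ k) ∧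
    ∀ u v : V, u ≠ v → c u = c v → (c u : ℕ∞) < G.edist u v

/-- The packing chromatic number of `G`: the least `k` admitting a `k`-packing coloring. -/
noncomputable def packingChromaticNumber {V : Type*} (G : SimpleGraph V) : ℕ :=
  sInf {k | ∃ c : V → ℕ, IsPackingColoring G k c}

/-- `G` is `4`-`χρ`-vertex-critical: `χρ(G) = 4` and deleting any vertex drops `χρ` below `4`. -/
def FourVertexCritical {V : Type*} (G : SimpleGraph V) : Prop :=
  packingChromaticNumber G = 4 ∧
    ∀ v : V, packingChromaticNumber (G.induce ({v}ᶜ : Set V)) < 4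

/-- `G` contains a (not necessarily induced) subgraph isomorphic to `H`. -/
def HasCopy {W V : Type*} (H : SimpleGraph W) (G : SimpleGraph V) : Prop :=
  ∃ f : H →g G, Function.Injective f

/-- The cycle on `n` vertices (for `n ≥ 3`). -/
def CycGraph (n : ℕ) : SimpleGraph (Fin n) :=
  SimpleGraph.fromRel (fun i j => (i.val + 1) % n = j.val)

/-- A member of the family `𝓕₁`: two triangles `{0,1,2}` and `{l+3,l+4,l+5}` joined by a
path from `u = 2` to `v = l+3` with `l` internal vertices `3,…,l+2`. -/
def F1Graph (l : ℕ) : SimpleGraph (Fin (l + 6)) :=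
  SimpleGraph.fromRel (fun i j =>
    j.val = i.val + 1 ∨ (i.val = 0 ∧ j.val = 2) ∨ (i.val = l + 3 ∧ j.val = l + 5))

/-- A member of the family `𝓕₂`: a triangle `{0,1,2}` joined by a path from `u = 2` to
`v = l+3` with `l` internal vertices `3,…,l+2`, where `v` is the middle vertex of the path
`(l+4)-(l+3)-(l+5)`. -/
def F2Graph (l : ℕ) : SimpleGraph (Fin (l + 6)) :=
  SimpleGraph.fromRel (fun i j =>
    (j.val = i.val + 1 ∧ j.val ≤ l + 4) ∨ (i.val = 0 ∧ j.val = 2) ∨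
      (i.val = l + 3 ∧ j.val = l + 5))

/-- A member of the family `𝓕₃`: `A` is the path `0-1-2-3` (plus the edge `0-3` if
`c4 = true`, making it a 4-cycle) with non-pendant vertex `u = 2`, joined by a path with `l`
internal vertices `4,…,l+3` to the vertex `v = l+4` of the triangle `{l+4,l+5,l+6}`. -/
def F3Graph (c4 : Bool) (l : ℕ) : SimpleGraph (Fin (l + 7)) :=
  SimpleGraph.fromRel (fun i j =>
    (j.val = i.val + 1 ∧ i.val ≠ 3) ∨ (i.val = 2 ∧ j.val = 4) ∨
      (c4 = true ∧ i.val = 0 ∧ j.val = 3) ∨ (i.val = l + 4 ∧ j.val = l + 6))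

/-- A member of the family `𝓕₄`: paths `u₁(0)-u(1)-u₂(l+5+l')` and
`z₁(l+4+l')-z(l+3+l')-z₂(l+7+l')`, an edge `v(l+2)-v₁(l+6+l')`, with `u` joined to `v` by a
path through internal vertices `y₁(2),…,y_l(l+1)` and `v` joined to `z` by a path through
internal vertices `w₁(l+3),…,w_{l'}(l+2+l')`; if `e = 1` the extra edge `v₁ y_{l-1}` is
present, and if `e = 2` the extra edge `v₁ w₂` is present. -/
def F4Graph (l l' : ℕ) (e : Fin 3) : SimpleGraph (Fin (l + l' + 8)) :=
  SimpleGraph.fromRel (fun i j =>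
    (j.val = i.val + 1 ∧ j.val ≤ l + 4 + l') ∨ (i.val = 1 ∧ j.val = l + 5 + l') ∨
      (i.val = l + 2 ∧ j.val = l + 6 + l') ∨ (i.val = l + 3 + l' ∧ j.val = l + 7 + l') ∨
      (e = 1 ∧ i.val = l ∧ j.val = l + 6 + l') ∨
      (e = 2 ∧ i.val = l + 4 ∧ j.val = l + 6 + l'))

/-- A member of the family `𝓕₅`: `A` is the path `0-1-2-3` (plus edge `0-3` if `ac4 = true`)
with non-pendant vertex `u = 2`, `B` is the path `(l+5)-(l+4)-(l+6)-(l+7)` (plus edge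
`(l+5)-(l+7)` if `bc4 = true`) with non-pendant vertex `v = l+4`, and `u` is joined to `v`
by a path with `l` internal vertices `4,…,l+3`. -/
def F5Graph (ac4 bc4 : Bool) (l : ℕ) : SimpleGraph (Fin (l + 8)) :=
  SimpleGraph.fromRel (fun i j =>
    (j.val = i.val + 1 ∧ i.val ≠ 3 ∧ i.val ≠ l + 5) ∨ (i.val = 2 ∧ j.val = 4) ∨
      (i.val = l + 4 ∧ j.val = l + 6) ∨ (ac4 = true ∧ i.val = 0 ∧ j.val = 3) ∨
      (bc4 = true ∧ i.val = l + 5 ∧ j.val = l + 7))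

/-!
Write `u = 2`, `v = l + 4` and let `p` be the path of `l + 6` vertices running through `A`, the
connecting path and `B`. In a 3-packing coloring a vertex with three neighbors cannot take
color 1, and of two consecutive vertices of a path at distance at least 2 from its ends one has
color 1. So color 1 alternates along `p` from `u`, which avoids it, to `v` at the odd distance
`l + 1`; hence `v` gets color 1, which it cannot.

For the upper bounds, `F5Graph.level` folds the graph onto a path without shrinking distances,
so packing colorings of the path pull back. The periodic coloring `3,1,2,1,…` of the path can
be given phases that fit both ends once any vertex is deleted; for `χρ ≤ 4`, color `G - 3`
that way and give the vertex `3` color 4.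
-/

section PackingColoring

variable {V : Type*} {G : SimpleGraph V} {k : ℕ} {c : V → ℕ}

theorem IsPackingColoring.mono {k' : ℕ} (hc : IsPackingColoring G k c) (hk : k ≤ k') :
    IsPackingColoring G k' c :=
  ⟨fun v => ⟨(hc.1 v).1, (hc.1 v).2.trans hk⟩, hc.2⟩

theorem packingChromaticNumber_le (hc : IsPackingColoring G k c) :
    packingChromaticNumber G ≤ k :=
  Nat.sInf_le ⟨c, hc⟩

theorem packingChromaticNumber_eq_succ (hc : IsPackingColoring G (k + 1) c)
    (h : ∀ c', ¬ IsPackingColoring G k c') : packingChromaticNumber G = k + 1 := by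
  refine le_antisymm (packingChromaticNumber_le hc) (Nat.succ_le_of_lt ?_)
  by_contra! hle
  obtain ⟨c', hc'⟩ := Nat.sInf_mem (⟨k + 1, c, hc⟩ : {k | ∃ c, IsPackingColoring G k c}.Nonempty)
  exact h c' (hc'.mono hle)

theorem IsPackingColoring.lt_of_edist_le {u v : V} {n : ℕ} (hc : IsPackingColoring G k c)
    (huv : u ≠ v) (he : c u = c v) (hd : G.edist u v ≤ n) : c u < n := by
  exact_mod_cast (hc.2 u v huv he).trans_le hd

theorem IsPackingColoring.ne_of_adj {u v : V} (hc : IsPackingColoring G k c) (h : G.Adj u v) :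
    c u ≠ c v := fun he => by
  have := hc.lt_of_edist_le h.ne he (n := 1) (edist_eq_one_iff_adj.mpr h).le
  have := (hc.1 u).1
  omega

theorem edist_le_two_of_adj {a b d : V} (hab : G.Adj a b) (hbd : G.Adj b d) :
    G.edist a d ≤ 2 := by
  simpa using (Walk.cons hab (Walk.cons hbd Walk.nil)).edist_le

theorem edist_le_three_of_adj {a b d e : V} (hab : G.Adj a b) (hbd : G.Adj b d)
    (hde : G.Adj d e) : G.edist a e ≤ 3 := by
  simpa using (Walk.cons hab (Walk.cons hbd (Walk.cons hde Walk.nil))).edist_le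

theorem le_edist_of_lipschitz (f : V → ℕ) (hf : ∀ a b, G.Adj a b → f b ≤ f a + 1) (u v : V) :
    ((f v - f u : ℕ) : ℕ∞) ≤ G.edist u v := by
  refine le_iInf fun p => ?_
  suffices f v ≤ f u + p.length by exact_mod_cast (by omega : f v - f u ≤ p.length)
  induction p with
  | nil => simp
  | cons h p ih => have := hf _ _ h; simp only [Walk.length_cons]; omega

theorem IsPackingColoring.of_level (f : V → ℕ)
    (hf : ∀ a b, G.Adj a b → f b = f a + 1 ∨ f a = f b + 1) (hk : ∀ v, 1 ≤ c v ∧ c v ≤ k)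
    (hfib : ∀ a b, a ≠ b → f a = f b → c a = c b → c a = 1)
    (hgap : ∀ a b, f a < f b → c a = c b → f a + c a < f b) : IsPackingColoring G k c := by
  have hlip : ∀ a b, G.Adj a b → f b ≤ f a + 1 := fun a b h => by have := hf a b h; omega
  refine ⟨hk, fun u v huv he => ?_⟩
  rcases lt_trichotomy (f u) (f v) with h | h | h
  · have := hgap u v h he
    exact (Nat.cast_lt.mpr (by omega : c u < f v - f u)).trans_le
      (le_edist_of_lipschitz f hlip u v)
  · rw [hfib u v huv h he, Nat.cast_one, lt_iff_not_ge, edist_le_one_iff_adj_or_eq]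
    rintro (hadj | rfl)
    · have := hf u v hadj; omega
    · exact huv rfl
  · have := hgap v u h he.symm
    rw [edist_comm]
    exact (Nat.cast_lt.mpr (by omega : c u < f u - f v)).trans_le
      (le_edist_of_lipschitz f hlip v u)

theorem IsPackingColoring.ne_one_of_three_neighbors {v x y z : V} (hc : IsPackingColoring G 3 c)
    (hx : G.Adj v x) (hy : G.Adj v y) (hz : G.Adj v z) (hxy : x ≠ y) (hxz : x ≠ z) (hyz : y ≠ z) :
    c v ≠ 1 := by
  intro hv
  have h1 := hc.ne_of_adj hx
  have h2 := hc.ne_of_adj hy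
  have h3 := hc.ne_of_adj hz
  have hxy' := mt (hc.lt_of_edist_le (n := 2) hxy · (edist_le_two_of_adj hx.symm hy))
  have hxz' := mt (hc.lt_of_edist_le (n := 2) hxz · (edist_le_two_of_adj hx.symm hz))
  have hyz' := mt (hc.lt_of_edist_le (n := 2) hyz · (edist_le_two_of_adj hy.symm hz))
  have := hc.1 x; have := hc.1 y; have := hc.1 z
  omega

theorem IsPackingColoring.not_two_three {a b d e : V} (hc : IsPackingColoring G 3 c)
    (hab : G.Adj a b) (hbd : G.Adj b d) (hde : G.Adj d e) (had : a ≠ d) (hbe : b ≠ e)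
    (hae : a ≠ e) : ¬ (c d = 2 ∧ c e = 3) := by
  rintro ⟨hd, he⟩
  have hb2 := hc.ne_of_adj hbd
  have hb3 := mt (hc.lt_of_edist_le (n := 2) hbe · (edist_le_two_of_adj hbd hde))
  have ha1 := hc.ne_of_adj hab
  have ha2 := mt (hc.lt_of_edist_le (n := 2) had · (edist_le_two_of_adj hab hbd))
  have ha3 := mt (hc.lt_of_edist_le (n := 3) hae · (edist_le_three_of_adj hab hbd hde))
  have := hc.1 a; have := hc.1 b
  omega

section Path

variable {p : ℕ → V} {n : ℕ} (hadj : ∀ t < n, G.Adj (p t) (p (t + 1)))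
  (hinj : ∀ s ≤ n, ∀ t ≤ n, s ≠ t → p s ≠ p t)
include hadj hinj

theorem IsPackingColoring.eq_one_or_eq_one_of_path (hc : IsPackingColoring G 3 c) {j : ℕ}
    (hj : 2 ≤ j) (hjn : j + 3 ≤ n) : c (p j) = 1 ∨ c (p (j + 1)) = 1 := by
  obtain ⟨i, rfl⟩ : ∃ i, j = i + 2 := ⟨j - 2, by omega⟩
  show c (p (i + 2)) = 1 ∨ c (p (i + 3)) = 1
  have h23 : c (p (i + 2)) ≠ c (p (i + 3)) := hc.ne_of_adj (hadj (i + 2) (by omega))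
  have := hc.1 (p (i + 2)); have := hc.1 (p (i + 3))
  by_contra! h
  rcases (by omega : c (p (i + 2)) = 2 ∧ c (p (i + 3)) = 3 ∨
      c (p (i + 3)) = 2 ∧ c (p (i + 2)) = 3) with h' | h'
  · exact hc.not_two_three (hadj i (by omega)) (hadj (i + 1) (by omega))
      (hadj (i + 2) (by omega))
      (hinj _ (by omega) _ (by omega) (by omega)) (hinj _ (by omega) _ (by omega) (by omega))
      (hinj _ (by omega) _ (by omega) (by omega)) h'
  · exact hc.not_two_three (hadj (i + 4) (by omega)).symm (hadj (i + 3) (by omega)).symm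
      (hadj (i + 2) (by omega)).symm (hinj _ (by omega) _ (by omega) (by omega))
      (hinj _ (by omega) _ (by omega) (by omega)) (hinj _ (by omega) _ (by omega) (by omega)) h'

theorem not_isPackingColoring_three_of_path (hn : Odd n) (h5 : 5 ≤ n) {x y : V}
    (hx : G.Adj (p 2) x) (hx1 : x ≠ p 1) (hx3 : x ≠ p 3)
    (hy : G.Adj (p (n - 2)) y) (hy1 : y ≠ p (n - 3)) (hy3 : y ≠ p (n - 1)) :
    ¬ IsPackingColoring G 3 c := by
  intro hc
  have hu : c (p 2) ≠ 1 := hc.ne_one_of_three_neighbors (hadj 1 (by omega)).symm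
    (hadj 2 (by omega)) hx (hinj _ (by omega) _ (by omega) (by omega)) hx1.symm hx3.symm
  have hv : c (p (n - 2)) ≠ 1 := by
    obtain ⟨m, rfl⟩ : ∃ m, n = m + 3 := ⟨n - 3, by omega⟩
    exact hc.ne_one_of_three_neighbors (hadj m (by omega)).symm (hadj (m + 1) (by omega)) hy
      (hinj _ (by omega) _ (by omega) (by omega)) hy1.symm hy3.symm
  have parity : ∀ i ≤ n - 4, (c (p (i + 2)) = 1 ↔ Odd i) := by
    intro i hi
    induction i with
    | zero => simpa using hu
    | succ i ih =>
      have hone : c (p (i + 2)) = 1 ∨ c (p (i + 3)) = 1 :=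
        hc.eq_one_or_eq_one_of_path hadj hinj (by omega) (by omega)
      have hdiff : c (p (i + 2)) ≠ c (p (i + 3)) := hc.ne_of_adj (hadj (i + 2) (by omega))
      show c (p (i + 3)) = 1 ↔ _
      rw [Nat.odd_add_one, ← ih (by omega)]
      omega
  exact hv (by simpa [show n - 4 + 2 = n - 2 by omega] using
    (parity (n - 4) le_rfl).mpr (by obtain ⟨m, rfl⟩ := hn; exact ⟨m - 2, by omega⟩))

end Path

end PackingColoring

structure IsPathPacking (S : Set ℕ) (k : ℕ) (g : ℕ → ℕ) : Prop where
  bounds : ∀ x ∈ S, 1 ≤ g x ∧ g x ≤ k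
  gap : ∀ x ∈ S, ∀ y ∈ S, x < y → g x = g y → x + g x < y

theorem IsPathPacking.comp_sub {S : Set ℕ} {k : ℕ} {g : ℕ → ℕ} (hg : IsPathPacking S k g)
    (n : ℕ) : IsPathPacking {x | x ≤ n ∧ n - x ∈ S} k (fun x => g (n - x)) := by
  refine ⟨fun x hx => hg.bounds _ hx.2, fun x hx y hy hxy (he : g (n - x) = g (n - y)) => ?_⟩
  have := hy.1
  have := hg.gap _ hy.2 _ hx.2 (by omega) he.symm
  show x + g (n - x) < y
  omega

def pathColor (x : ℕ) : ℕ :=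
  if x % 2 = 1 then 1 else if x % 4 = 2 then 2 else 3

theorem isPathPacking_pathColor_add (S : Set ℕ) (a : ℕ) :
    IsPathPacking S 3 (fun x => pathColor (x + a)) := by
  refine ⟨fun x _ => ?_, fun x _ y _ hxy he => ?_⟩ <;>
    simp only [pathColor] at * <;> split_ifs at * <;> omega

def cutColor (t x : ℕ) : ℕ :=
  if x < t then pathColor x else pathColor (x + 3)

theorem isPathPacking_cutColor (t : ℕ) : IsPathPacking {t}ᶜ 3 (cutColor t) := by
  refine ⟨fun x _ => ?_, fun x hx y hy hxy he => ?_⟩ <;>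
    simp only [cutColor, pathColor, Set.mem_compl_singleton_iff] at * <;> split_ifs at * <;>
    omega

def endColor (x : ℕ) : ℕ :=
  if x ≤ 3 then x else pathColor (x + 1)

theorem isPathPacking_endColor : IsPathPacking (Set.Ici 1) 3 endColor := by
  refine ⟨fun x hx => ?_, fun x hx y hy hxy he => ?_⟩ <;>
    simp only [endColor, pathColor, Set.mem_Ici] at * <;> split_ifs at * <;> omega

theorem pathColor_of_odd {x : ℕ} (hx : Odd x) : pathColor x = 1 := by
  obtain ⟨m, rfl⟩ := hx
  simp only [pathColor]
  split_ifs <;> omega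

namespace F5Graph

variable {ac4 bc4 : Bool} {l : ℕ}

/-- Folding `F5Graph` onto the path `0-1-2-4-5-⋯-(l+4)-(l+6)-(l+7)`: the vertices `3` and `l+5`
are sent to the levels of `1` and `l+6`. -/
def level (l i : ℕ) : ℕ :=
  if i ≤ 2 then i else if i = 3 then 1 else if i ≤ l + 4 then i - 1
  else if i = l + 7 then l + 5 else l + 4

theorem level_spec (l i : ℕ) (hi : i < l + 8) :
    (i ≤ 2 ∧ level l i = i) ∨ (i = 3 ∧ level l i = 1) ∨
      (4 ≤ i ∧ i ≤ l + 4 ∧ level l i = i - 1) ∨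
      ((i = l + 5 ∨ i = l + 6) ∧ level l i = l + 4) ∨ (i = l + 7 ∧ level l i = l + 5) := by
  simp only [level]
  split_ifs <;> omega

theorem level_adj {i j : Fin (l + 8)} (h : (F5Graph ac4 bc4 l).Adj i j) :
    level l j = level l i + 1 ∨ level l i = level l j + 1 := by
  have := level_spec l i i.isLt
  have := level_spec l j j.isLt
  obtain ⟨-, h⟩ := (fromRel_adj _ _ _).mp h
  rcases h with (h | h | h | ⟨-, h⟩ | ⟨-, h⟩) | (h | h | h | ⟨-, h⟩ | ⟨-, h⟩) <;> omega

theorem adj_of_val {i j : Fin (l + 8)}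
    (h : j.val = i.val + 1 ∧ i.val ≠ 3 ∧ i.val ≠ l + 5 ∨ i.val = 2 ∧ j.val = 4 ∨
      i.val = l + 4 ∧ j.val = l + 6) : (F5Graph ac4 bc4 l).Adj i j := by
  refine (fromRel_adj _ _ _).mpr ⟨fun hij => ?_, Or.inl (by tauto)⟩
  subst hij
  omega

/-- `g ∘ level` is a coloring of `F5Graph - w`: `g` packs the levels `S` occupied there, and is
`1` on the levels `1` and `l + 4` whenever both of their vertices survive. -/
structure IsLevelColoring (l w : ℕ) (S : Set ℕ) (g : ℕ → ℕ) : Prop where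
  level_mem : ∀ i < l + 8, i ≠ w → level l i ∈ S
  isPathPacking : IsPathPacking S 3 g
  apply_one : w ≠ 1 → w ≠ 3 → g 1 = 1
  apply_add_four : w ≠ l + 5 → w ≠ l + 6 → g (l + 4) = 1

section IsLevelColoring

variable {w : ℕ} {S : Set ℕ} {g : ℕ → ℕ}

theorem IsLevelColoring.eq_one_of_level_eq (h : IsLevelColoring l w S g) {i j : ℕ}
    (hi : i < l + 8) (hj : j < l + 8) (hiw : i ≠ w) (hjw : j ≠ w) (hij : i ≠ j)
    (he : level l i = level l j) : g (level l i) = 1 := by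
  have := level_spec l i hi
  have := level_spec l j hj
  rcases (by omega : level l i = 1 ∧ w ≠ 1 ∧ w ≠ 3 ∨ level l i = l + 4 ∧ w ≠ l + 5 ∧ w ≠ l + 6)
    with ⟨hlev, hw⟩ | ⟨hlev, hw⟩
  · rw [hlev]; exact h.apply_one hw.1 hw.2
  · rw [hlev]; exact h.apply_add_four hw.1 hw.2

theorem IsLevelColoring.isPackingColoring_induce {w : Fin (l + 8)}
    (h : IsLevelColoring l w.val S g) :
    IsPackingColoring ((F5Graph ac4 bc4 l).induce {w}ᶜ) 3 (fun v => g (level l v.val.val)) := by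
  have hw : ∀ v : ({w}ᶜ : Set (Fin (l + 8))), v.val.val ≠ w.val := fun v hv =>
    v.2 (Fin.ext hv)
  have hS := fun v : ({w}ᶜ : Set (Fin (l + 8))) => h.level_mem _ v.val.isLt (hw v)
  refine .of_level (fun v => level l v.val.val) (fun a b hab => level_adj hab)
    (fun v => h.isPathPacking.bounds _ (hS v)) (fun a b hab he _ => ?_)
    (fun a b hlt he => h.isPathPacking.gap _ (hS a) _ (hS b) hlt he)
  exact h.eq_one_of_level_eq a.val.isLt b.val.isLt (hw a) (hw b)
    (fun hv => hab (Subtype.ext (Fin.ext hv))) he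

theorem IsLevelColoring.isPackingColoring_update (h : IsLevelColoring l w S g) :
    IsPackingColoring (F5Graph ac4 bc4 l) 4
      (fun v => if v.val = w then 4 else g (level l v.val)) := by
  have hg : ∀ v : Fin (l + 8), v.val ≠ w → 1 ≤ g (level l v) ∧ g (level l v) ≤ 3 :=
    fun v hv => h.isPathPacking.bounds _ (h.level_mem _ v.isLt hv)
  refine .of_level (fun v => level l v.val) (fun a b hab => level_adj hab) (fun v => ?_)
    (fun a b hab he hc => ?_) (fun a b hlt hc => ?_)
  · split_ifs with hv
    · omega
    · have := hg v hv; omega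
  · have hab' : a.val ≠ b.val := fun hv => hab (Fin.ext hv)
    split_ifs at hc ⊢ with ha hb hb
    · omega
    · have := hg b hb; omega
    · have := hg a ha; omega
    · exact h.eq_one_of_level_eq a.isLt b.isLt ha hb hab' he
  · split_ifs at hc ⊢ with ha hb hb
    · have : a = b := Fin.ext (ha.trans hb.symm)
      subst this
      omega
    · have := hg b hb; omega
    · have := hg a ha; omega
    · exact h.isPathPacking.gap _ (h.level_mem _ a.isLt ha) _ (h.level_mem _ b.isLt hb) hlt hc

end IsLevelColoring

theorem isLevelColoring_pathColor_succ (hl : Even l) {w : ℕ} (hw : w = 1 ∨ w = 3) :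
    IsLevelColoring l w Set.univ (fun x => pathColor (x + 1)) :=
  ⟨fun _ _ _ => Set.mem_univ _, isPathPacking_pathColor_add _ 1, by omega,
    fun _ _ => pathColor_of_odd (by simpa [add_assoc] using hl.add_odd (by decide : Odd 5))⟩

theorem isLevelColoring_pathColor {w : ℕ} (hw : w = l + 5 ∨ w = l + 6) :
    IsLevelColoring l w Set.univ pathColor :=
  ⟨fun _ _ _ => Set.mem_univ _, by simpa using isPathPacking_pathColor_add Set.univ 0,
    fun _ _ => rfl, by omega⟩

theorem isLevelColoring_cutColor (hl : Even l) {w : ℕ} (hw : w = 2 ∨ 4 ≤ w ∧ w ≤ l + 4) :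
    IsLevelColoring l w {level l w}ᶜ (cutColor (level l w)) := by
  have hlev := level_spec l w (by omega)
  refine ⟨fun i hi hiw => ?_, isPathPacking_cutColor _, fun _ _ => ?_, fun _ _ => ?_⟩
  · have := level_spec l i hi
    rw [Set.mem_compl_singleton_iff]
    omega
  · rw [cutColor, if_pos (by omega)]
    rfl
  · rw [cutColor, if_neg (by omega)]
    exact pathColor_of_odd (by simpa [add_assoc] using hl.add_odd (by decide : Odd 7))

theorem endColor_add_four (hl : Even l) : endColor (l + 4) = 1 := by
  rw [endColor, if_neg (by omega)]
  exact pathColor_of_odd (by simpa [add_assoc] using hl.add_odd (by decide : Odd 5))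

theorem isLevelColoring_endColor (hl : Even l) : IsLevelColoring l 0 (Set.Ici 1) endColor := by
  refine ⟨fun i hi hiw => ?_, isPathPacking_endColor, fun _ _ => rfl,
    fun _ _ => endColor_add_four hl⟩
  have := level_spec l i hi
  rw [Set.mem_Ici]
  omega

theorem isLevelColoring_endColor_sub (hl : Even l) :
    IsLevelColoring l (l + 7) {x | x ≤ l + 5 ∧ l + 5 - x ∈ Set.Ici 1}
      (fun x => endColor (l + 5 - x)) := by
  refine ⟨fun i hi hiw => ?_, isPathPacking_endColor.comp_sub (l + 5), fun _ _ => ?_,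
    fun _ _ => ?_⟩
  · have := level_spec l i hi
    exact ⟨by omega, Set.mem_Ici.mpr (by omega)⟩
  · simpa using endColor_add_four hl
  · simp [endColor]

theorem exists_isLevelColoring (hl : Even l) {w : ℕ} (hw : w < l + 8) :
    ∃ S g, IsLevelColoring l w S g := by
  rcases (by omega : w = 0 ∨ (w = 1 ∨ w = 3) ∨ (w = 2 ∨ 4 ≤ w ∧ w ≤ l + 4) ∨
      (w = l + 5 ∨ w = l + 6) ∨ w = l + 7) with rfl | h | h | h | rfl
  · exact ⟨_, _, isLevelColoring_endColor hl⟩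
  · exact ⟨_, _, isLevelColoring_pathColor_succ hl h⟩
  · exact ⟨_, _, isLevelColoring_cutColor hl h⟩
  · exact ⟨_, _, isLevelColoring_pathColor h⟩
  · exact ⟨_, _, isLevelColoring_endColor_sub hl⟩

def spine (l t : ℕ) : Fin (l + 8) :=
  Fin.ofNat (l + 8) (if t ≤ 2 then t else if t ≤ l + 3 then t + 1 else t + 2)

theorem spine_val_spec {t : ℕ} (ht : t ≤ l + 5) :
    (t ≤ 2 ∧ (spine l t).val = t) ∨ (3 ≤ t ∧ t ≤ l + 3 ∧ (spine l t).val = t + 1) ∨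
      (l + 4 ≤ t ∧ (spine l t).val = t + 2) := by
  simp only [spine, Fin.val_ofNat]
  split_ifs <;> rw [Nat.mod_eq_of_lt (by omega)] <;> omega

theorem not_isPackingColoring_three (hl : Even l) (c : Fin (l + 8) → ℕ) :
    ¬ IsPackingColoring (F5Graph ac4 bc4 l) 3 c := by
  have val := fun t (ht : t ≤ l + 5) => spine_val_spec (l := l) ht
  have := val 1 (by omega); have := val 2 (by omega); have := val 3 (by omega)
  have := val (l + 2) (by omega); have := val (l + 3) (by omega); have := val (l + 4) (by omega)
  refine not_isPackingColoring_three_of_path (p := spine l) (n := l + 5)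
    (fun t ht => adj_of_val ?_) (fun s hs t ht hst h => hst ?_)
    (by simpa using hl.add_odd (by decide)) (by omega)
    (x := ⟨3, by omega⟩) (adj_of_val ?_) (Fin.ne_of_val_ne ?_) (Fin.ne_of_val_ne ?_)
    (y := ⟨l + 5, by omega⟩) (adj_of_val ?_) (Fin.ne_of_val_ne ?_) (Fin.ne_of_val_ne ?_)
  · have := val t (by omega); have := val (t + 1) ht; omega
  · have := congrArg Fin.val h; have := val s hs; have := val t ht; omega
  all_goals simp only [Nat.reduceSubDiff]; omega

end F5Graph

theorem F5_fourVertexCritical (ac4 bc4 : Bool) (k : ℕ) :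
    FourVertexCritical (F5Graph ac4 bc4 (2 * k)) := by
  have hl : Even (2 * k) := even_two_mul k
  refine ⟨packingChromaticNumber_eq_succ
    (F5Graph.isLevelColoring_pathColor_succ hl (w := 3) (.inr rfl)).isPackingColoring_update
    (F5Graph.not_isPackingColoring_three hl), fun w => ?_⟩
  obtain ⟨S, g, h⟩ := F5Graph.exists_isLevelColoring hl w.isLt
  exact (packingChromaticNumber_le h.isPackingColoring_induce).trans_lt (by norm_num)
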